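/- The K×K matrix P constructed by Algorithm 2 is a k-cyclic 2K/(K-kL+k)-regular (K, K, kL, (K-kL)(K-kL+k)/2) placement delivery array. -/

import Mathlib

/-!
Write `n = (K - kL)/k`, `b = K/(K - kL + k)`, `F = b(n + 1) = K/k` and `T = n(n + 1)/2`.
The integers of `A` number the pairs `x < y ≤ n` bijectively by `[0, T)`, so each of them
occurs once in every diagonal block `A` of `P₁` and once in every shifted block `Aᵀ`: `2b`
times in all. The stars of column `j` of `P₁` are the rows `j, …, j + F - n - 1` (mod `F`),
and for two occurrences of the same integer the crossing cells are stars, which is C3.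

Procedures 3 and 4 take entry `(i, j)` of `P` from entry `(i / k, j % F)` of `P₁` and add
`(i % k) T + (j / F) k T`. Since `a < T`, the new integer determines its mixed-radix digits
`a`, `i % k` and `j / F`, so the occurrences of an integer of `P` are in bijection with those
of its digit `a` in `P₁`; this carries regularity and C3 over, while the star band of `P₁`
becomes a `k`-cyclic band of `k(F - n) = kL` stars.
-/

/-- A generalized placement delivery array predicate: an `F × Kc` array
(entries `none` = star, `some s` = integer) whose integer alphabet is `[lo, hi)`,
satisfying: C1 (exactly `Z` stars per column), all integers lie in `[lo, hi)`,
C2 (every integer in `[lo, hi)` appears), and C3. -/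
def isPDAgen (Kc F Z lo hi : ℕ) (P : ℕ → ℕ → Option ℕ) : Prop :=
  (∀ j < Kc, ((Finset.range F).filter (fun i => P i j = none)).card = Z) ∧
  (∀ i < F, ∀ j < Kc, ∀ s : ℕ, P i j = some s → lo ≤ s ∧ s < hi) ∧
  (∀ s : ℕ, lo ≤ s → s < hi → ∃ i < F, ∃ j < Kc, P i j = some s) ∧
  (∀ i₁ j₁ i₂ j₂ s, i₁ < F → j₁ < Kc → i₂ < F → j₂ < Kc →
    P i₁ j₁ = some s → P i₂ j₂ = some s → (i₁, j₁) ≠ (i₂, j₂) →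
    i₁ ≠ i₂ ∧ j₁ ≠ j₂ ∧ P i₁ j₂ = none ∧ P i₂ j₁ = none)

/-- A `(Kc, F, Z, S)` PDA with integer alphabet `[0, S)`. -/
def isPDA (Kc F Z S : ℕ) (P : ℕ → ℕ → Option ℕ) : Prop :=
  isPDAgen Kc F Z 0 S P

/-- `g`-regularity on alphabet `[lo, hi)`: each integer appears exactly `g` times. -/
def isRegularGen (g Kc F lo hi : ℕ) (P : ℕ → ℕ → Option ℕ) : Prop :=
  ∀ s : ℕ, lo ≤ s → s < hi →
    (((Finset.range F) ×ˢ (Finset.range Kc)).filter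
      (fun p => P p.1 p.2 = some s)).card = g

/-- `t`-cyclic: in each column the `Z` stars occupy (cyclically) consecutive rows,
and each column's starting star position is the previous column's shifted down by `t`. -/
def isCyclic (t Kc F Z : ℕ) (P : ℕ → ℕ → Option ℕ) : Prop :=
  ∃ start : ℕ → ℕ,
    (∀ j < Kc, ∀ i < F, (P i j = none ↔ ∃ r < Z, i = (start j + r) % F)) ∧
    (∀ j : ℕ, j + 1 < Kc → start (j + 1) % F = (start j + t) % F)

/-- The integer values of the matrix `A` of procedure 1:
`aVal n 0 j = j - 1` and `aVal n (i+1) j = aVal n i j + (n - (i+1))`. -/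
def aVal (n : ℕ) : ℕ → ℕ → ℕ
  | 0, j => j - 1
  | i + 1, j => aVal n i j + (n - (i + 1))

/-- The `(n+1) × (n+1)` matrix `A` of procedure 1: stars on and below the
diagonal, integers `aVal n i j` above it. -/
def Amat (n i j : ℕ) : Option ℕ :=
  if j ≤ i then none else some (aVal n i j)

/-- The block matrix `P₁` of procedure 2, with `b` row/column blocks of size
`n+1`: block `A` when the column block equals the row block, `Aᵀ` when the
column block is the row block plus one (mod `b`), and all-star otherwise. -/
def P1mat (n b i j : ℕ) : Option ℕ :=
  if j / (n + 1) = i / (n + 1) then Amat n (i % (n + 1)) (j % (n + 1))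
  else if j / (n + 1) = (i / (n + 1) + 1) % b then Amat n (j % (n + 1)) (i % (n + 1))
  else none

/-- The `K × (K/k)` matrix `P̃₁` of procedure 3: each row of `P₁` is expanded
into `k` rows, with integer entries incremented by `S₁ = (K-kL)(K-kL+k)/(2k²)`
from one row to the next. -/
def Ptilde1 (K k L i j : ℕ) : Option ℕ :=
  (P1mat ((K - k * L) / k) (K / (K - k * L + k)) (i / k) j).map
    (fun s => s + (i % k) * ((K - k * L) * (K - k * L + k) / (2 * k ^ 2)))

/-- The `K × K` matrix `P` of procedure 4: concatenation of
`P̃₁, P̃₁ + S̃₁, …, P̃₁ + (k-1)S̃₁` where `S̃₁ = (K-kL)(K-kL+k)/(2k)`. -/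
def Pfull (K k L i j : ℕ) : Option ℕ :=
  (Ptilde1 K k L i (j % (K / k))).map
    (fun s => s + (j / (K / k)) * ((K - k * L) * (K - k * L + k) / (2 * k)))

open Finset

def HasStarBand (t Kc F Z : ℕ) (P : ℕ → ℕ → Option ℕ) : Prop :=
  ∀ j < Kc, ∀ i < F, (P i j = none ↔ ∃ r < Z, i = (t * j + r) % F)

/-- Condition C3 reduced to its last two clauses, which imply the first two. -/
def CrossStar (Kc F : ℕ) (P : ℕ → ℕ → Option ℕ) : Prop :=
  ∀ i₁ j₁ i₂ j₂ s, i₁ < F → j₁ < Kc → i₂ < F → j₂ < Kc →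
    P i₁ j₁ = some s → P i₂ j₂ = some s → (i₁, j₁) ≠ (i₂, j₂) → P i₁ j₂ = none

section Predicates

variable {t Kc F Z : ℕ} {P : ℕ → ℕ → Option ℕ}

theorem HasStarBand.isCyclic (h : HasStarBand t Kc F Z P) : isCyclic t Kc F Z P :=
  ⟨(t * ·), h, fun j _ => congrArg (· % F) (Nat.mul_succ t j)⟩

theorem HasStarBand.card_filter_eq_none (h : HasStarBand t Kc F Z P) (hZ : Z ≤ F) {j : ℕ}
    (hj : j < Kc) : ((range F).filter (fun i => P i j = none)).card = Z := by
  have himage : (range F).filter (fun i => P i j = none) =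
      (range Z).image (fun r => (t * j + r) % F) := by
    ext i
    simp only [mem_filter, mem_range, mem_image]
    constructor
    · rintro ⟨hi, hnone⟩
      obtain ⟨r, hr, rfl⟩ := (h j hj i hi).1 hnone
      exact ⟨r, hr, rfl⟩
    · rintro ⟨r, hr, rfl⟩
      have hlt : (t * j + r) % F < F := Nat.mod_lt _ (by omega)
      exact ⟨hlt, (h j hj _ hlt).2 ⟨r, hr, rfl⟩⟩
  rw [himage, card_image_of_injOn, card_range]
  intro r hr r' hr' hrr'
  simp only [coe_range, Set.mem_Iio] at hr hr'
  exact (Nat.ModEq.add_left_cancel' _ hrr').eq_of_lt_of_lt (by omega) (by omega)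

theorem CrossStar.c3 (h : CrossStar Kc F P) :
    ∀ i₁ j₁ i₂ j₂ s, i₁ < F → j₁ < Kc → i₂ < F → j₂ < Kc →
      P i₁ j₁ = some s → P i₂ j₂ = some s → (i₁, j₁) ≠ (i₂, j₂) →
      i₁ ≠ i₂ ∧ j₁ ≠ j₂ ∧ P i₁ j₂ = none ∧ P i₂ j₁ = none := by
  intro i₁ j₁ i₂ j₂ s hi₁ hj₁ hi₂ hj₂ hs₁ hs₂ hne
  have h₁₂ := h i₁ j₁ i₂ j₂ s hi₁ hj₁ hi₂ hj₂ hs₁ hs₂ hne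
  have h₂₁ := h i₂ j₂ i₁ j₁ s hi₂ hj₂ hi₁ hj₁ hs₂ hs₁ hne.symm
  refine ⟨?_, ?_, h₁₂, h₂₁⟩
  · rintro rfl
    exact Option.some_ne_none s (hs₂.symm.trans h₁₂)
  · rintro rfl
    exact Option.some_ne_none s (hs₂.symm.trans h₂₁)

theorem isRegularGen.exists_eq_some {g lo hi : ℕ} (h : isRegularGen g Kc F lo hi P) (hg : 0 < g) :
    ∀ s, lo ≤ s → s < hi → ∃ i < F, ∃ j < Kc, P i j = some s := by
  intro s hlo hhi
  obtain ⟨⟨i, j⟩, hij⟩ := card_pos.1 ((h s hlo hhi).symm ▸ hg)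
  simp only [mem_filter, mem_product, mem_range] at hij
  exact ⟨i, hij.1.1, j, hij.1.2, hij.2⟩

theorem isPDA_of_hasStarBand {g S : ℕ} (hband : HasStarBand t F F Z P) (hZ : Z ≤ F)
    (hval : ∀ i < F, ∀ j < F, ∀ s, P i j = some s → s < S)
    (hreg : isRegularGen g F F 0 S P) (hg : 0 < g) (hcross : CrossStar F F P) :
    isPDA F F Z S P :=
  ⟨fun _ hj => hband.card_filter_eq_none hZ hj,
    fun i hi j hj s hs => ⟨Nat.zero_le s, hval i hi j hj s hs⟩,
    hreg.exists_eq_some hg, hcross.c3⟩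

end Predicates

theorem mixedRadix_iff {T k s a r q : ℕ} (hT : 0 < T) (hk : 0 < k) :
    (a < T ∧ r < k ∧ a + r * T + q * (k * T) = s) ↔
      (s % T = a ∧ s / T % k = r ∧ s / T / k = q) := by
  rw [show a + r * T + q * (k * T) = a + T * (r + k * q) by ring]
  constructor
  · rintro ⟨ha, hr, rfl⟩
    obtain ⟨hdiv, hmod⟩ := (Nat.div_mod_unique hT).2 ⟨rfl, ha⟩
    obtain ⟨hdiv', hmod'⟩ := (Nat.div_mod_unique hk).2 ⟨rfl, hr⟩
    rw [hdiv, hmod]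
    exact ⟨rfl, hmod', hdiv'⟩
  · rintro ⟨rfl, rfl, rfl⟩
    refine ⟨Nat.mod_lt _ hT, Nat.mod_lt _ hk, ?_⟩
    rw [Nat.mod_add_div (s / T) k, Nat.mod_add_div s T]

theorem exists_div_eq_add_mod_iff {k F Z i j : ℕ} (hk : 0 < k) (hi : i < k * F) :
    (∃ r < Z, i / k = (j + r) % F) ↔ ∃ r < k * Z, i = (k * j + r) % (k * F) := by
  constructor
  · rintro ⟨r, hr, hdiv⟩
    refine ⟨k * r + i % k, by nlinarith [Nat.mod_lt i hk], ?_⟩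
    have hmod : i / k ≡ j + r [MOD F] := by rw [Nat.ModEq, hdiv, Nat.mod_mod]
    have := (hmod.mul_left' k).add_right (i % k)
    rw [Nat.div_add_mod] at this
    rw [← add_assoc, ← mul_add]
    exact (Nat.mod_eq_of_lt hi).symm.trans this
  · rintro ⟨r, hr, rfl⟩
    refine ⟨r / k, Nat.div_lt_of_lt_mul hr, ?_⟩
    rw [Nat.mod_mul_right_div_self, Nat.mul_add_div hk]

/-- Procedures 3 and 4 of Algorithm 2 in one step. -/
def blowUp (k F T : ℕ) (Q : ℕ → ℕ → Option ℕ) (i j : ℕ) : Option ℕ :=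
  (Q (i / k) (j % F)).map (fun a => a + (i % k) * T + (j / F) * (k * T))

section BlowUp

variable {k F T Z : ℕ} {Q : ℕ → ℕ → Option ℕ}

theorem blowUp_eq_none_iff {i j : ℕ} : blowUp k F T Q i j = none ↔ Q (i / k) (j % F) = none :=
  Option.map_eq_none_iff

theorem blowUp_eq_some_iff (hk : 0 < k) (hT : 0 < T) (hval : ∀ i j a, Q i j = some a → a < T)
    {i j s : ℕ} : blowUp k F T Q i j = some s ↔
      Q (i / k) (j % F) = some (s % T) ∧ s / T % k = i % k ∧ s / T / k = j / F := by
  unfold blowUp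
  rw [Option.map_eq_some_iff]
  constructor
  · rintro ⟨a, ha, rfl⟩
    obtain ⟨hmod, hr, hq⟩ := (mixedRadix_iff hT hk).1 ⟨hval _ _ a ha, Nat.mod_lt i hk, rfl⟩
    rw [hmod]
    exact ⟨ha, hr, hq⟩
  · rintro ⟨ha, hr, hq⟩
    exact ⟨_, ha, ((mixedRadix_iff hT hk).2 ⟨rfl, hr, hq⟩).2.2⟩

theorem blowUp_lt (hk : 0 < k) (hval : ∀ i j a, Q i j = some a → a < T) {i j s : ℕ}
    (hj : j < k * F) (hs : blowUp k F T Q i j = some s) : s < k ^ 2 * T := by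
  obtain ⟨a, ha, rfl⟩ := Option.map_eq_some_iff.1 hs
  have hr : (i % k + 1) * T ≤ k * T := Nat.mul_le_mul_right _ (Nat.mod_lt i hk)
  have hq : (j / F + 1) * (k * T) ≤ k * (k * T) :=
    Nat.mul_le_mul_right _ (Nat.div_lt_of_lt_mul (by rwa [mul_comm]))
  nlinarith [hval _ _ a ha]

theorem hasStarBand_blowUp (h : HasStarBand 1 F F Z Q) (hk : 0 < k) (hF : 0 < F) :
    HasStarBand k (k * F) (k * F) (k * Z) (blowUp k F T Q) := by
  intro j _ i hi
  rw [blowUp_eq_none_iff, h _ (Nat.mod_lt j hF) _ (Nat.div_lt_of_lt_mul hi)]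
  simp only [one_mul, Nat.mod_add_mod]
  exact exists_div_eq_add_mod_iff hk hi

theorem crossStar_blowUp (h : CrossStar F F Q) (hk : 0 < k) (hT : 0 < T)
    (hval : ∀ i j a, Q i j = some a → a < T) : CrossStar (k * F) (k * F) (blowUp k F T Q) := by
  intro i₁ j₁ i₂ j₂ s hi₁ hj₁ hi₂ hj₂ hs₁ hs₂ hne
  have hF : 0 < F := Nat.pos_of_mul_pos_left (by omega : 0 < k * F)
  obtain ⟨hQ₁, hr₁, hq₁⟩ := (blowUp_eq_some_iff hk hT hval).1 hs₁
  obtain ⟨hQ₂, hr₂, hq₂⟩ := (blowUp_eq_some_iff hk hT hval).1 hs₂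
  rw [blowUp_eq_none_iff]
  refine h _ _ _ _ _ (Nat.div_lt_of_lt_mul hi₁) (Nat.mod_lt _ hF) (Nat.div_lt_of_lt_mul hi₂)
    (Nat.mod_lt _ hF) hQ₁ hQ₂ fun heq => hne ?_
  simp only [Prod.mk.injEq] at heq ⊢
  constructor
  · rw [← Nat.div_add_mod i₁ k, ← Nat.div_add_mod i₂ k, heq.1, ← hr₁, hr₂]
  · rw [← Nat.mod_add_div j₁ F, ← Nat.mod_add_div j₂ F, heq.2, ← hq₁, hq₂]

theorem isRegularGen_blowUp {g : ℕ} (h : isRegularGen g F F 0 T Q) (hk : 0 < k) (hT : 0 < T)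
    (hval : ∀ i j a, Q i j = some a → a < T) :
    isRegularGen g (k * F) (k * F) 0 (k ^ 2 * T) (blowUp k F T Q) := by
  intro s _ hs
  have hq : s / T / k < k := by
    rw [Nat.div_div_eq_div_mul]
    exact Nat.div_lt_of_lt_mul (by nlinarith)
  rw [← h (s % T) (Nat.zero_le _) (Nat.mod_lt s hT)]
  have hr : s / T % k < k := Nat.mod_lt _ hk
  have hrow : ∀ p, (k * p + s / T % k) / k = p ∧ (k * p + s / T % k) % k = s / T % k :=
    fun p => (Nat.div_mod_unique hk).2 ⟨add_comm _ _, hr⟩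
  have hcol : ∀ c, c < F → (c + s / T / k * F) / F = s / T / k ∧ (c + s / T / k * F) % F = c :=
    fun c hc => (Nat.div_mod_unique (by omega)).2 ⟨by ring, hc⟩
  apply card_nbij' (fun p => (p.1 / k, p.2 % F))
    (fun p => (k * p.1 + s / T % k, p.2 + s / T / k * F))
  · rintro ⟨i, j⟩ hij
    simp only [coe_filter, mem_product, mem_range, Set.mem_ofPred_eq] at hij ⊢
    have hF : 0 < F := Nat.pos_of_mul_pos_left (by omega : 0 < k * F)
    exact ⟨⟨Nat.div_lt_of_lt_mul hij.1.1, Nat.mod_lt _ hF⟩,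
      ((blowUp_eq_some_iff hk hT hval).1 hij.2).1⟩
  · rintro ⟨p, c⟩ hpc
    simp only [coe_filter, mem_product, mem_range, Set.mem_ofPred_eq] at hpc ⊢
    obtain ⟨⟨hp, hc⟩, hpc⟩ := hpc
    refine ⟨⟨by nlinarith, by nlinarith⟩, (blowUp_eq_some_iff hk hT hval).2 ?_⟩
    rw [(hrow p).1, (hrow p).2, (hcol c hc).1, (hcol c hc).2]
    exact ⟨hpc, rfl, rfl⟩
  · rintro ⟨i, j⟩ hij
    simp only [coe_filter, mem_product, mem_range, Set.mem_ofPred_eq] at hij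
    obtain ⟨-, hr, hq⟩ := (blowUp_eq_some_iff hk hT hval).1 hij.2
    simp only [hr, hq, Nat.div_add_mod, Nat.mod_add_div']
  · rintro ⟨p, c⟩ hpc
    simp only [coe_filter, mem_product, mem_range, Set.mem_ofPred_eq] at hpc
    obtain ⟨⟨-, hc⟩, -⟩ := hpc
    simp only [(hrow p).1, (hcol c hc).2]

end BlowUp

section TriangleNumbering

/-- The rows of `A` list consecutive integers; row `x` starts at `rowStart n x`. -/
def rowStart (n : ℕ) : ℕ → ℕ
  | 0 => 0
  | x + 1 => rowStart n x + (n - x)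

variable {n x y x' y' : ℕ}

theorem rowStart_mono (n : ℕ) : Monotone (rowStart n) :=
  monotone_nat_of_le_succ fun _ => Nat.le_add_right _ _

theorem rowStart_self (n : ℕ) : rowStart n n = n * (n + 1) / 2 := by
  suffices h : ∀ x ≤ n, 2 * rowStart n x + x * x = 2 * (n * x) + x by
    have := h n le_rfl
    rw [show n * (n + 1) = n * n + n by ring]
    omega
  intro x hx
  induction x with
  | zero => rfl
  | succ x ih =>
    have := ih (by omega)
    obtain ⟨d, rfl⟩ : ∃ d, n = x + 1 + d := ⟨n - (x + 1), by omega⟩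
    simp only [rowStart, show x + 1 + d - x = d + 1 by omega] at this ⊢
    nlinarith

theorem aVal_eq_rowStart_add (hxy : x < y) (hy : y ≤ n) :
    aVal n x y = rowStart n x + (y - x - 1) := by
  induction x with
  | zero => simp [aVal, rowStart]
  | succ x ih =>
    simp only [aVal, rowStart, ih (by omega)]
    omega

theorem rowStart_le_aVal_lt (hxy : x < y) (hy : y ≤ n) :
    rowStart n x ≤ aVal n x y ∧ aVal n x y < rowStart n (x + 1) := by
  rw [aVal_eq_rowStart_add hxy hy, rowStart]
  omega

theorem aVal_lt (hxy : x < y) (hy : y ≤ n) : aVal n x y < n * (n + 1) / 2 := by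
  rw [← rowStart_self]
  exact (rowStart_le_aVal_lt hxy hy).2.trans_le (rowStart_mono n (by omega))

theorem aVal_inj (hxy : x < y) (hy : y ≤ n) (hxy' : x' < y') (hy' : y' ≤ n)
    (h : aVal n x y = aVal n x' y') : x = x' ∧ y = y' := by
  have hrow := rowStart_le_aVal_lt hxy hy
  have hrow' := rowStart_le_aVal_lt hxy' hy'
  obtain rfl : x = x' := by
    by_contra hne
    rcases Nat.lt_or_gt_of_ne hne with hlt | hlt
    · have := rowStart_mono n (show x + 1 ≤ x' from hlt)
      omega
    · have := rowStart_mono n (show x' + 1 ≤ x from hlt)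
      omega
  rw [aVal_eq_rowStart_add hxy hy, aVal_eq_rowStart_add hxy' hy'] at h
  exact ⟨rfl, by omega⟩

theorem exists_aVal_eq {a : ℕ} (ha : a < n * (n + 1) / 2) :
    ∃ x y, x < y ∧ y ≤ n ∧ aVal n x y = a := by
  rw [← rowStart_self] at ha
  have hex : ∃ x, a < rowStart n (x + 1) := ⟨n, ha.trans_le (rowStart_mono n n.le_succ)⟩
  set x := Nat.find hex
  have hlt : a < rowStart n x + (n - x) := Nat.find_spec hex
  have hle : rowStart n x ≤ a := by
    rcases Nat.eq_zero_or_pos x with hx | hx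
    · rw [hx]
      exact Nat.zero_le a
    · have := Nat.find_min hex (show x - 1 < x by omega)
      rw [Nat.sub_add_cancel hx] at this
      omega
  refine ⟨x, x + 1 + (a - rowStart n x), by omega, by omega, ?_⟩
  rw [aVal_eq_rowStart_add (by omega) (by omega)]
  omega

end TriangleNumbering

theorem exists_lt_eq_add_mod_iff {F Z i : ℕ} (j : ℕ) (hi : i < F) :
    (∃ r < Z, i = (j + r) % F) ↔ (i + F - j % F) % F < Z := by
  have hjF : j % F < F := Nat.mod_lt j (by omega)
  constructor
  · rintro ⟨r, hr, rfl⟩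
    suffices h : ((j + r) % F + F - j % F) % F = r % F from h ▸ (Nat.mod_le r F).trans_lt hr
    refine Nat.ModEq.add_right_cancel' (j % F) ?_
    rw [Nat.sub_add_cancel (by omega)]
    calc (j + r) % F + F ≡ j + r [MOD F] := by rw [Nat.ModEq, Nat.add_mod_right, Nat.mod_mod]
      _ ≡ r + j % F [MOD F] := by rw [add_comm]; exact (Nat.mod_modEq j F).symm.add_left r
  · intro h
    refine ⟨_, h, ?_⟩
    rw [Nat.add_mod_mod, ← Nat.mod_add_mod, ← Nat.add_sub_assoc (by omega),
      Nat.add_sub_cancel_left, Nat.add_mod_right, Nat.mod_eq_of_lt hi]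

theorem add_sub_mod_eq_ite {F i j : ℕ} (hi : i < F) (hj : j < F) :
    (i + F - j) % F = if j ≤ i then i - j else i + F - j := by
  split_ifs with h
  · rw [show i + F - j = i - j + F by omega, Nat.add_mod_right, Nat.mod_eq_of_lt (by omega)]
  · exact Nat.mod_eq_of_lt (by omega)

section BlockMatrix

variable {n b : ℕ}

theorem Amat_eq_none_iff {x y : ℕ} : Amat n x y = none ↔ y ≤ x := by
  unfold Amat
  split_ifs with h <;> simp [h]

theorem Amat_eq_some_iff {x y a : ℕ} : Amat n x y = some a ↔ x < y ∧ aVal n x y = a := by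
  unfold Amat
  split_ifs with h <;> simp [h, not_le.1]

theorem block_div_mod {B x : ℕ} (hx : x ≤ n) :
    (B * (n + 1) + x) / (n + 1) = B ∧ (B * (n + 1) + x) % (n + 1) = x :=
  (Nat.div_mod_unique (by omega)).2 ⟨by ring, by omega⟩

theorem block_inj {B B' x x' : ℕ} (hx : x ≤ n) (hx' : x' ≤ n)
    (h : B * (n + 1) + x = B' * (n + 1) + x') : B = B' ∧ x = x' := by
  obtain ⟨hdiv, hmod⟩ := block_div_mod (B := B) hx
  obtain ⟨hdiv', hmod'⟩ := block_div_mod (B := B') hx'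
  rw [h] at hdiv hmod
  exact ⟨hdiv.symm.trans hdiv', hmod.symm.trans hmod'⟩

theorem block_lt {B x : ℕ} (hB : B < b) (hx : x ≤ n) : B * (n + 1) + x < b * (n + 1) := by
  nlinarith

theorem exists_block_of_lt {i : ℕ} (hi : i < b * (n + 1)) :
    ∃ B < b, ∃ x ≤ n, i = B * (n + 1) + x :=
  ⟨i / (n + 1), Nat.div_lt_of_lt_mul (by rwa [mul_comm]), i % (n + 1),
    Nat.lt_succ_iff.1 (Nat.mod_lt _ n.succ_pos), (Nat.div_add_mod' i (n + 1)).symm⟩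

theorem succ_mod_ne (hb : 2 ≤ b) {B : ℕ} (hB : B < b) : (B + 1) % b ≠ B := by
  rcases (show B + 1 ≤ b from hB).lt_or_eq with h | h
  · rw [Nat.mod_eq_of_lt h]
    omega
  · rw [h, Nat.mod_self]
    omega

theorem succ_mod_inj {B B' : ℕ} (hB : B < b) (hB' : B' < b) (h : (B + 1) % b = (B' + 1) % b) :
    B = B' :=
  (Nat.ModEq.add_right_cancel' 1 h).eq_of_lt_of_lt hB hB'

theorem P1mat_block {B B' x y : ℕ} (hx : x ≤ n) (hy : y ≤ n) :
    P1mat n b (B * (n + 1) + x) (B' * (n + 1) + y) =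
      if B' = B then Amat n x y else if B' = (B + 1) % b then Amat n y x else none := by
  rw [P1mat, (block_div_mod hx).1, (block_div_mod hx).2, (block_div_mod hy).1,
    (block_div_mod hy).2]

theorem P1mat_block_eq_none {B B' x y : ℕ} (hx : x ≤ n) (hy : y ≤ n) (hdiag : B' = B → y ≤ x)
    (hshift : B' = (B + 1) % b → x ≤ y) : P1mat n b (B * (n + 1) + x) (B' * (n + 1) + y) = none := by
  rw [P1mat_block hx hy]
  split_ifs with h₁ h₂
  · exact Amat_eq_none_iff.2 (hdiag h₁)
  · exact Amat_eq_none_iff.2 (hshift h₂)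
  · rfl

theorem P1mat_lt {i j a : ℕ} (h : P1mat n b i j = some a) : a < n * (n + 1) / 2 := by
  have hlt : ∀ m, m % (n + 1) ≤ n := fun m => Nat.lt_succ_iff.1 (Nat.mod_lt m n.succ_pos)
  unfold P1mat at h
  split_ifs at h
  all_goals obtain ⟨hxy, rfl⟩ := Amat_eq_some_iff.1 h; exact aVal_lt hxy (hlt _)

theorem P1mat_eq_some_iff (hb : 2 ≤ b) {i j a : ℕ} (hi : i < b * (n + 1)) (hj : j < b * (n + 1)) :
    P1mat n b i j = some a ↔ ∃ x y, x < y ∧ y ≤ n ∧ aVal n x y = a ∧ ∃ B < b,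
      (i = B * (n + 1) + x ∧ j = B * (n + 1) + y) ∨
      (i = B * (n + 1) + y ∧ j = (B + 1) % b * (n + 1) + x) := by
  obtain ⟨I, hI, u, hu, rfl⟩ := exists_block_of_lt hi
  obtain ⟨J, hJ, v, hv, rfl⟩ := exists_block_of_lt hj
  rw [P1mat_block hu hv]
  constructor
  · intro h
    split_ifs at h with h₁ h₂
    · obtain ⟨huv, rfl⟩ := Amat_eq_some_iff.1 h
      exact ⟨u, v, huv, hv, rfl, I, hI, Or.inl ⟨rfl, by rw [h₁]⟩⟩
    · obtain ⟨hvu, rfl⟩ := Amat_eq_some_iff.1 h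
      exact ⟨v, u, hvu, hu, rfl, I, hI, Or.inr ⟨rfl, by rw [h₂]⟩⟩
  · rintro ⟨x, y, hxy, hy, rfl, B, hB, ⟨hi', hj'⟩ | ⟨hi', hj'⟩⟩
    · obtain ⟨rfl, rfl⟩ := block_inj hu (by omega) hi'
      obtain ⟨rfl, rfl⟩ := block_inj hv hy hj'
      rw [if_pos rfl]
      exact Amat_eq_some_iff.2 ⟨hxy, rfl⟩
    · obtain ⟨rfl, rfl⟩ := block_inj hu hy hi'
      obtain ⟨rfl, rfl⟩ := block_inj hv (by omega) hj'
      rw [if_neg (succ_mod_ne hb hB), if_pos rfl]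
      exact Amat_eq_some_iff.2 ⟨hxy, rfl⟩

theorem P1mat_crossStar (hb : 2 ≤ b) : CrossStar (b * (n + 1)) (b * (n + 1)) (P1mat n b) := by
  intro i₁ j₁ i₂ j₂ a hi₁ hj₁ hi₂ hj₂ ha₁ ha₂ hne
  obtain ⟨x, y, hxy, hy, rfl, B₁, hB₁, ⟨rfl, rfl⟩ | ⟨rfl, rfl⟩⟩ :=
    (P1mat_eq_some_iff hb hi₁ hj₁).1 ha₁ <;>
  obtain ⟨x', y', hxy', hy', hval, B₂, hB₂, ⟨rfl, rfl⟩ | ⟨rfl, rfl⟩⟩ :=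
    (P1mat_eq_some_iff hb hi₂ hj₂).1 ha₂ <;>
  obtain ⟨rfl, rfl⟩ := aVal_inj hxy' hy' hxy hy hval
  · exact P1mat_block_eq_none (by omega) hy (fun h => absurd (by rw [h]) hne) fun _ => hxy.le
  · exact P1mat_block_eq_none (by omega) (by omega) (fun _ => le_rfl) fun _ => le_rfl
  · exact P1mat_block_eq_none hy hy (fun _ => le_rfl) fun _ => le_rfl
  · exact P1mat_block_eq_none hy (by omega) (fun _ => hxy.le)
      fun h => absurd (by rw [succ_mod_inj hB₂ hB₁ h]) hne

theorem P1mat_hasStarBand (hb : 2 ≤ b) :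
    HasStarBand 1 (b * (n + 1)) (b * (n + 1)) (b * (n + 1) - n) (P1mat n b) := by
  intro j hj i hi
  rw [one_mul, exists_lt_eq_add_mod_iff j hi, Nat.mod_eq_of_lt hj, add_sub_mod_eq_ite hi hj]
  have hF : 2 * (n + 1) ≤ b * (n + 1) := Nat.mul_le_mul_right _ hb
  obtain ⟨I, hI, x, hx, rfl⟩ := exists_block_of_lt hi
  obtain ⟨J, hJ, y, hy, rfl⟩ := exists_block_of_lt hj
  rw [P1mat_block hx hy]
  by_cases hJI : J = I
  · subst hJI
    rw [if_pos rfl, Amat_eq_none_iff]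
    split_ifs <;> omega
  rw [if_neg hJI]
  by_cases hwrap : I + 1 = b
  · have hIF : I * (n + 1) + (n + 1) = b * (n + 1) := by rw [← hwrap]; ring
    rw [hwrap, Nat.mod_self]
    by_cases hJ0 : J = 0
    · subst hJ0
      rw [if_pos rfl, Amat_eq_none_iff]
      split_ifs <;> omega
    · have hJI' : (J + 1) * (n + 1) ≤ I * (n + 1) := Nat.mul_le_mul_right _ (by omega)
      have hJ1 : 1 * (n + 1) ≤ J * (n + 1) := Nat.mul_le_mul_right _ (by omega)
      rw [add_mul] at hJI'
      rw [if_neg hJ0]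
      refine iff_of_true rfl ?_
      split_ifs <;> omega
  · rw [Nat.mod_eq_of_lt (by omega : I + 1 < b)]
    by_cases hJ1 : J = I + 1
    · subst hJ1
      rw [if_pos rfl, Amat_eq_none_iff, add_mul]
      split_ifs <;> omega
    · rw [if_neg hJ1]
      refine iff_of_true rfl ?_
      rcases Nat.lt_or_gt_of_ne hJI with hlt | hgt
      · have h₁ : (J + 1) * (n + 1) ≤ I * (n + 1) := Nat.mul_le_mul_right _ hlt
        have h₂ : (I + 2) * (n + 1) ≤ b * (n + 1) := Nat.mul_le_mul_right _ (by omega)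
        rw [add_mul] at h₁ h₂
        split_ifs <;> omega
      · have h₁ : (I + 2) * (n + 1) ≤ J * (n + 1) := Nat.mul_le_mul_right _ (by omega)
        rw [add_mul] at h₁
        split_ifs <;> omega

theorem P1mat_isRegularGen (hb : 2 ≤ b) :
    isRegularGen (2 * b) (b * (n + 1)) (b * (n + 1)) 0 (n * (n + 1) / 2) (P1mat n b) := by
  intro a _ ha
  obtain ⟨x, y, hxy, hy, rfl⟩ := exists_aVal_eq ha
  have hx : x ≤ n := by omega
  have hfiber : ((range (b * (n + 1)) ×ˢ range (b * (n + 1))).filter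
        fun p => P1mat n b p.1 p.2 = some (aVal n x y)) =
      (range b).image (fun B => (B * (n + 1) + x, B * (n + 1) + y)) ∪
      (range b).image (fun B => (B * (n + 1) + y, (B + 1) % b * (n + 1) + x)) := by
    ext ⟨i, j⟩
    simp only [mem_filter, mem_product, mem_range, mem_union, mem_image, Prod.mk.injEq]
    constructor
    · rintro ⟨⟨hi, hj⟩, h⟩
      obtain ⟨x', y', hxy', hy', hval, B, hB, hij⟩ := (P1mat_eq_some_iff hb hi hj).1 h
      obtain ⟨rfl, rfl⟩ := aVal_inj hxy' hy' hxy hy hval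
      rcases hij with ⟨rfl, rfl⟩ | ⟨rfl, rfl⟩
      · exact Or.inl ⟨B, hB, rfl, rfl⟩
      · exact Or.inr ⟨B, hB, rfl, rfl⟩
    · have hb0 : 0 < b := by omega
      rintro (⟨B, hB, rfl, rfl⟩ | ⟨B, hB, rfl, rfl⟩)
      · refine ⟨⟨block_lt hB hx, block_lt hB hy⟩, (P1mat_eq_some_iff hb (block_lt hB hx)
          (block_lt hB hy)).2 ⟨x, y, hxy, hy, rfl, B, hB, Or.inl ⟨rfl, rfl⟩⟩⟩
      · have hB' := Nat.mod_lt (B + 1) hb0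
        refine ⟨⟨block_lt hB hy, block_lt hB' hx⟩, (P1mat_eq_some_iff hb (block_lt hB hy)
          (block_lt hB' hx)).2 ⟨x, y, hxy, hy, rfl, B, hB, Or.inr ⟨rfl, rfl⟩⟩⟩
  rw [hfiber, card_union_of_disjoint, card_image_of_injective, card_image_of_injective,
    card_range, two_mul]
  · exact fun B B' h => (block_inj hy hy (Prod.mk.inj h).1).1
  · exact fun B B' h => (block_inj hx hx (Prod.mk.inj h).1).1
  · rw [disjoint_left]
    rintro _ hp hp'
    obtain ⟨B, -, rfl⟩ := mem_image.1 hp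
    obtain ⟨B', -, h⟩ := mem_image.1 hp'
    exact hxy.ne' (block_inj hy hx (Prod.mk.inj h).1).2

end BlockMatrix

theorem mul_mul_mul_add_one (k n : ℕ) :
    k * n * (k * (n + 1)) = 2 * k ^ 2 * (n * (n + 1) / 2) := by
  rw [mul_comm 2, mul_assoc (k ^ 2), Nat.two_mul_div_two_of_even (Nat.even_mul_succ_self n)]
  ring

theorem Pfull_eq_blowUp {K k L n b : ℕ} (hk : 0 < k) (hn : K - k * L = k * n)
    (hK : K = k * (n + 1) * b) :
    Pfull K k L = blowUp k (b * (n + 1)) (n * (n + 1) / 2) (P1mat n b) := by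
  have hv : K - k * L + k = k * (n + 1) := by rw [hn]; ring
  have hS₁ : (K - k * L) * (K - k * L + k) / (2 * k ^ 2) = n * (n + 1) / 2 := by
    rw [hv, hn, mul_mul_mul_add_one, Nat.mul_div_cancel_left _ (by positivity)]
  have hS : (K - k * L) * (K - k * L + k) / (2 * k) = k * (n * (n + 1) / 2) := by
    rw [hv, hn, mul_mul_mul_add_one, show 2 * k ^ 2 * (n * (n + 1) / 2) =
      2 * k * (k * (n * (n + 1) / 2)) by ring, Nat.mul_div_cancel_left _ (by positivity)]
  have hb : K / (K - k * L + k) = b := by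
    rw [hv, hK, Nat.mul_div_cancel_left _ (by positivity)]
  have hdiv : K / k = b * (n + 1) := by
    rw [hK, mul_assoc, Nat.mul_div_cancel_left _ hk, mul_comm]
  funext i j
  simp only [Pfull, Ptilde1, blowUp, Option.map_map]
  rw [hS₁, hS, hb, hn, Nat.mul_div_cancel_left _ hk, hdiv]
  rfl

theorem blowUp_P1mat {k n b : ℕ} (hk : 0 < k) (hn : 0 < n) (hb : 2 ≤ b) :
    isPDA (k * (b * (n + 1))) (k * (b * (n + 1))) (k * (b * (n + 1) - n))
        (k ^ 2 * (n * (n + 1) / 2)) (blowUp k (b * (n + 1)) (n * (n + 1) / 2) (P1mat n b)) ∧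
      isRegularGen (2 * b) (k * (b * (n + 1))) (k * (b * (n + 1))) 0 (k ^ 2 * (n * (n + 1) / 2))
        (blowUp k (b * (n + 1)) (n * (n + 1) / 2) (P1mat n b)) ∧
      isCyclic k (k * (b * (n + 1))) (k * (b * (n + 1))) (k * (b * (n + 1) - n))
        (blowUp k (b * (n + 1)) (n * (n + 1) / 2) (P1mat n b)) := by
  have hT : 0 < n * (n + 1) / 2 := Nat.div_pos (by nlinarith) two_pos
  have hval : ∀ i j a, P1mat n b i j = some a → a < n * (n + 1) / 2 := fun _ _ _ => P1mat_lt
  have hband := hasStarBand_blowUp (T := n * (n + 1) / 2) (P1mat_hasStarBand (n := n) hb) hk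
    (by positivity)
  have hreg := isRegularGen_blowUp (P1mat_isRegularGen hb) hk hT hval
  refine ⟨isPDA_of_hasStarBand hband (Nat.mul_le_mul_left k (Nat.sub_le _ _))
    (fun _ _ _ hj _ => blowUp_lt hk hval hj) hreg (by omega)
    (crossStar_blowUp (P1mat_crossStar hb) hk hT hval), hreg, hband.isCyclic⟩

theorem stmt12_general (K k L : ℕ) (hk : 0 < k) (hKL : k * L < K)
    (hdk : k ∣ K) (hdv : (K - k * L + k) ∣ K)
    (hb : 2 ≤ K / (K - k * L + k)) :
    isPDA K K (k * L) ((K - k * L) * (K - k * L + k) / 2) (Pfull K k L) ∧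
    isRegularGen (2 * K / (K - k * L + k)) K K 0
      ((K - k * L) * (K - k * L + k) / 2) (Pfull K k L) ∧
    isCyclic k K K (k * L) (Pfull K k L) := by
  obtain ⟨n, hn⟩ : k ∣ K - k * L := Nat.dvd_sub hdk (dvd_mul_right k L)
  obtain ⟨b, hKb⟩ := hdv
  have hv : K - k * L + k = k * (n + 1) := by rw [hn]; ring
  rw [hv] at hKb hb
  have hpos : 0 < k * (n + 1) := Nat.mul_pos hk n.succ_pos
  rw [hKb, Nat.mul_div_cancel_left _ hpos] at hb
  have hK : K = k * (b * (n + 1)) := by rw [hKb]; ring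
  have hS : (K - k * L) * (K - k * L + k) / 2 = k ^ 2 * (n * (n + 1) / 2) := by
    rw [hv, hn, mul_mul_mul_add_one, mul_assoc, Nat.mul_div_cancel_left _ two_pos]
  have hg : 2 * K / (K - k * L + k) = 2 * b := by
    rw [hv, hKb, mul_left_comm, Nat.mul_div_cancel_left _ hpos]
  have hZ : k * L = k * (b * (n + 1) - n) := by
    rw [Nat.mul_sub, ← hK]
    omega
  have hn0 : 0 < n := Nat.pos_of_ne_zero fun h => by simp [h] at hn; omega
  rw [hS, hg, Pfull_eq_blowUp hk hn hKb, hZ, hK]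
  exact blowUp_P1mat hk hn0 hb

/-- The `K × K` matrix `P` constructed by Algorithm 2 is a `k`-cyclic
`2K/(K-kL+k)`-regular `(K, K, kL, (K-kL)(K-kL+k)/2)` PDA. -/
theorem stmt12 (K k L : ℕ) (hk : 0 < k) (hL : 0 < L) (hKL : k * L < K)
    (hdk : k ∣ K) (hdv : (K - k * L + k) ∣ K)
    (hb : 2 ≤ K / (K - k * L + k)) :
    isPDA K K (k * L) ((K - k * L) * (K - k * L + k) / 2) (Pfull K k L) ∧
    isRegularGen (2 * K / (K - k * L + k)) K K 0
      ((K - k * L) * (K - k * L + k) / 2) (Pfull K k L) ∧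
    isCyclic k K K (k * L) (Pfull K k L) :=
  stmt12_general K k L hk hKL hdk hdv hb
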